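/- arXiv:1507.05463 — 2 statements merged into one kernel-verified Lean document; each statement's English description precedes it below -/
import Mathlib

section
/- Let G = (V,E) be a connected finite simple graph and let A and B be overlapping split-modules of G. Then A ∖ B is also a split-module of G. -/
open scoped Classical

/-- The set of neighbors of `X` in `V(G) ∖ X`. -/
def extNbhd {V : Type*} (G : SimpleGraph V) (X : Set V) : Set V :=
  {v | v ∉ X ∧ ∃ x ∈ X, G.Adj v x}

/-- The set of neighbors of `X ⊆ C` inside `C ∖ X`, i.e. relative to the induced
subgraph `G[C]`. -/
def extNbhdIn {V : Type*} (G : SimpleGraph V) (C X : Set V) : Set V :=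
  {v | v ∈ C ∧ v ∉ X ∧ ∃ x ∈ X, G.Adj v x}

/-- `{A, B}` is a split of `G`: a bipartition of the vertex set such that every vertex
of `N(B)` has the same neighborhood in `N(A)`. -/
def IsSplit {V : Type*} (G : SimpleGraph V) (A B : Set V) : Prop :=
  A ∪ B = Set.univ ∧ Disjoint A B ∧
    ∀ a₁ ∈ extNbhd G B, ∀ a₂ ∈ extNbhd G B, ∀ b ∈ extNbhd G A,
      (G.Adj a₁ b ↔ G.Adj a₂ b)

/-- `{A, C ∖ A}` is a split of the induced subgraph `G[C]`. -/
def IsSplitIn {V : Type*} (G : SimpleGraph V) (C A : Set V) : Prop :=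
  A ⊆ C ∧
    ∀ a₁ ∈ extNbhdIn G C (C \ A), ∀ a₂ ∈ extNbhdIn G C (C \ A),
      ∀ b ∈ extNbhdIn G C A, (G.Adj a₁ b ↔ G.Adj a₂ b)

/-- `A` is a split-module of `G`: either `A` is the whole vertex set, or empty, or there is
a connected component of `G` (with vertex set `C = c.supp`) such that `{A, C ∖ A}` is a
split of `G[C]`. -/
def IsSplitModule {V : Type*} (G : SimpleGraph V) (A : Set V) : Prop :=
  A = Set.univ ∨ A = ∅ ∨ ∃ c : G.ConnectedComponent, IsSplitIn G c.supp A


/-!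
Two vertices of `A ∖ B` can only see the outside of `A ∖ B` through the cut of `A` or through
the cut of `B`, and each of these cuts is complete bipartite between its two frontiers. So a
frontier vertex `a` of `A ∖ B` misses an outside neighbour `b` of `A ∖ B` only if, say, `b ∉ A`
while `a` has all its neighbours in `A` (the case `b ∈ A ∩ B` is the same after replacing
`(A, B)` by `(Bᶜ, Aᶜ)`). Then `a` lies on the frontier of `Bᶜ`, so every frontier vertex of `B`
is a neighbour of `a` and hence lies in `A`. But a path from `B ∖ A` to `a` leaves `B ∖ A` at some
vertex `y`, and `y` is on the frontier of `B`, either directly or through the complete cut of `A`;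
so `y ∈ A`, which is absurd.
-/

namespace SimpleGraph

variable {V : Type*} {G : SimpleGraph V} {X A B : Set V} {v : V}

lemma mem_extNbhd : v ∈ extNbhd G X ↔ v ∉ X ∧ ∃ x ∈ X, G.Adj v x := Iff.rfl

lemma mem_extNbhd_compl : v ∈ extNbhd G Xᶜ ↔ v ∈ X ∧ ∃ x ∉ X, G.Adj v x := by
  simp only [mem_extNbhd, Set.mem_compl_iff, not_not]

lemma extNbhdIn_univ (X : Set V) : extNbhdIn G Set.univ X = extNbhd G X := by
  ext v
  simp [extNbhdIn, extNbhd]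

/-- The edges between `X` and `Xᶜ` form a complete bipartite graph between the two frontiers. -/
def IsCompleteCut (G : SimpleGraph V) (X : Set V) : Prop :=
  ∀ a ∈ extNbhd G Xᶜ, ∀ b ∈ extNbhd G X, G.Adj a b

lemma IsCompleteCut.compl (h : IsCompleteCut G X) : IsCompleteCut G Xᶜ := by
  intro a ha b hb
  rw [compl_compl] at ha
  exact (h b hb a ha).symm

lemma isSplitIn_univ_iff : IsSplitIn G Set.univ X ↔ IsCompleteCut G X := by
  simp only [IsSplitIn, ← Set.compl_eq_univ_sdiff, extNbhdIn_univ, Set.subset_univ, true_and]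
  constructor
  · intro h a ha b hb
    have ⟨hbX, a₀, ha₀, hba₀⟩ := hb
    have ha₀' : a₀ ∈ extNbhd G Xᶜ := mem_extNbhd_compl.2 ⟨ha₀, b, hbX, hba₀.symm⟩
    exact (h a ha a₀ ha₀' b hb).2 hba₀.symm
  · intro h a₁ ha₁ a₂ ha₂ b hb
    exact iff_of_true (h a₁ ha₁ b hb) (h a₂ ha₂ b hb)

lemma Connected.supp_eq_univ (hG : G.Connected) (c : G.ConnectedComponent) :
    c.supp = Set.univ :=
  Set.eq_univ_of_forall fun _ ↦ (ConnectedComponent.mem_supp_iff _ _).2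
    (hG.preconnected.subsingleton_connectedComponent.elim _ _)

lemma Connected.isSplitModule_iff (hG : G.Connected) (hX : X.Nonempty) (hXc : Xᶜ.Nonempty) :
    IsSplitModule G X ↔ IsCompleteCut G X := by
  simp only [IsSplitModule, hG.supp_eq_univ, isSplitIn_univ_iff, exists_const_iff,
    hX.ne_empty, ← Set.compl_empty_iff, hXc.ne_empty, false_or]
  exact and_iff_right ⟨G.connectedComponentMk hX.some⟩

lemma IsCompleteCut.adj_of_notMem_left (hG : G.Preconnected) (hA : IsCompleteCut G A)
    (hB : IsCompleteCut G B) (hBA : (B \ A).Nonempty) {a b : V}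
    (ha : a ∈ extNbhd G (A \ B)ᶜ) (hb : b ∈ extNbhd G (A \ B)) (hbA : b ∉ A) : G.Adj a b := by
  obtain ⟨⟨haA, haB⟩, c, hc, hac⟩ := mem_extNbhd_compl.1 ha
  obtain ⟨-, a₂, ⟨ha₂A, ha₂B⟩, hba₂⟩ := hb
  have hbA' : b ∈ extNbhd G A := ⟨hbA, a₂, ha₂A, hba₂⟩
  by_cases haA' : a ∈ extNbhd G Aᶜ
  · exact hA a haA' b hbA'
  exfalso
  have hnbr : ∀ w, G.Adj a w → w ∈ A := fun w haw ↦ by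
    by_contra hw
    exact haA' (mem_extNbhd_compl.2 ⟨haA, w, hw, haw⟩)
  have hcB : c ∈ B := by
    by_contra hcB
    exact hc ⟨hnbr c hac, hcB⟩
  have haB' : a ∈ extNbhd G B := ⟨haB, c, hcB, hac⟩
  have hfrontier : ∀ y ∈ extNbhd G Bᶜ, y ∈ A := fun y hy ↦ hnbr y (hB y hy a haB').symm
  obtain ⟨z, hz⟩ := hBA
  obtain ⟨d, -, ⟨hyB, hyA⟩, hw⟩ :=
    (hG z a).some.exists_boundary_dart (B \ A) hz fun h ↦ h.2 haA
  refine hyA (hfrontier d.fst (mem_extNbhd_compl.2 ⟨hyB, ?_⟩))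
  by_cases hwB : d.snd ∈ B
  · have hwA : d.snd ∈ A := by
      by_contra hwA
      exact hw ⟨hwB, hwA⟩
    have ha₂A' : a₂ ∈ extNbhd G Aᶜ := mem_extNbhd_compl.2 ⟨ha₂A, b, hbA, hba₂.symm⟩
    exact ⟨a₂, ha₂B, (hA a₂ ha₂A' d.fst ⟨hyA, d.snd, hwA, d.adj⟩).symm⟩
  · exact ⟨d.snd, hwB, d.adj⟩

theorem IsCompleteCut.diff (hG : G.Preconnected) (hA : IsCompleteCut G A)
    (hB : IsCompleteCut G B) (hBA : (B \ A).Nonempty) : IsCompleteCut G (A \ B) := by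
  intro a ha b hb
  by_cases hbA : b ∈ A
  · have hbB : b ∉ Bᶜ := fun hbB ↦ hb.1 ⟨hbA, hbB⟩
    rw [← compl_sdiff_compl] at ha hb hBA
    exact hB.compl.adj_of_notMem_left hG hA.compl hBA ha hb hbB
  · exact hA.adj_of_notMem_left hG hB hBA ha hb hbA

end SimpleGraph

theorem splitModule_diff_general {V : Type*} (G : SimpleGraph V)
    (hconn : G.Connected) (A B : Set V)
    (hA : IsSplitModule G A) (hB : IsSplitModule G B)
    (hover : (A ∩ B).Nonempty ∧ (A \ B).Nonempty ∧ (B \ A).Nonempty) :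
    IsSplitModule G (A \ B) := by
  obtain ⟨⟨x, hxA, hxB⟩, ⟨y, hyA, hyB⟩, ⟨z, hzB, hzA⟩⟩ := hover
  rw [hconn.isSplitModule_iff ⟨x, hxA⟩ ⟨z, hzA⟩] at hA
  rw [hconn.isSplitModule_iff ⟨x, hxB⟩ ⟨y, hyB⟩] at hB
  rw [hconn.isSplitModule_iff (X := A \ B) ⟨y, hyA, hyB⟩ ⟨z, fun h ↦ hzA h.1⟩]
  exact hA.diff hconn.preconnected hB ⟨z, hzB, hzA⟩

/-- Let `G = (V,E)` be a connected finite simple graph and let `A` and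
`B` be overlapping split-modules of `G`. Then `A ∖ B` is also a split-module of `G`. -/
theorem splitModule_diff {V : Type*} [Fintype V] (G : SimpleGraph V)
    (hconn : G.Connected) (A B : Set V)
    (hA : IsSplitModule G A) (hB : IsSplitModule G B)
    (hover : (A ∩ B).Nonempty ∧ (A \ B).Nonempty ∧ (B \ A).Nonempty) :
    IsSplitModule G (A \ B) :=
  splitModule_diff_general G hconn A B hA hB hover
end

section
/- Let k ∈ ℕ and let G be a disconnected finite simple graph with rank-width at least k + 2. Then for all vertices v, w ∈ V(G): v ∼ₖ^G w if and only if v and w lie in the same connected component G' of G and v ∼ₖ^{G'} w (where ∼ₖ^{G'} is the relation ∼ₖ computed in the component G'). -/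
open scoped Classical

/-- The cut-rank of `U`: the rank over GF(2) of the `U × (V ∖ U)` submatrix of the
adjacency matrix of `G` (padded with zeros, which does not change the rank). -/
noncomputable def cutRank {V : Type*} [Fintype V] (G : SimpleGraph V) (U : Set V) : ℕ :=
  Matrix.rank (Matrix.of fun u w : V =>
    if u ∈ U ∧ w ∉ U ∧ G.Adj u w then (1 : ZMod 2) else 0)

/-- A rank-decomposition of `G`: a finite tree `T` of maximum degree 3 together with a
bijection `toLeaf` from the vertices of `G` to the leaves (degree-1 vertices) of `T`. -/
structure RankDecomp {V : Type*} [Fintype V] (G : SimpleGraph V) where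
  L : Type
  fintypeL : Fintype L
  T : SimpleGraph L
  isTree : T.IsTree
  maxDeg : ∀ x : L, (T.neighborSet x).ncard ≤ 3
  toLeaf : V → L
  inj : Function.Injective toLeaf
  range_eq : Set.range toLeaf = {x : L | (T.neighborSet x).ncard = 1}

/-- The width of the rank-decomposition `D` is at most `k`: for every edge `xy` of `T`,
the cut-rank of the set of vertices of `G` whose leaves lie on the `x`-side of `T − xy`
is at most `k`. -/
def RankDecomp.WidthLE {V : Type*} [Fintype V] {G : SimpleGraph V}
    (D : RankDecomp G) (k : ℕ) : Prop :=
  ∀ x y : D.L, D.T.Adj x y →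
    cutRank G {v : V | (D.T.deleteEdges {s(x, y)}).Reachable (D.toLeaf v) x} ≤ k

/-- The rank-width of `G`: the least `k` admitting a rank-decomposition of width at
most `k` (graphs on at most one vertex, having no rank-decomposition, get rank-width 0). -/
noncomputable def rankWidth {V : Type*} [Fintype V] (G : SimpleGraph V) : ℕ :=
  sInf {k | ∃ D : RankDecomp G, D.WidthLE k}

/-- The relation `∼ₖ`: `v ∼ₖ w` iff there is a split-module `M` of `G` with `v, w ∈ M`
and `rw(G[M]) ≤ k`. -/
def simRel {V : Type*} [Fintype V] (k : ℕ) (G : SimpleGraph V) (v w : V) : Prop :=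
  ∃ M : Set V, IsSplitModule G M ∧ v ∈ M ∧ w ∈ M ∧ rankWidth (G.induce M) ≤ k

/-!
A split-module of `G` other than `V(G)` and `∅` is one side of a split of a single component
`C`, and the splits of `G[C]` are exactly those of `C` read through the inclusion `C ↪ V(G)`.
Since rank-width is invariant under graph isomorphism, `G[M]` has the same rank-width whether
`M ⊆ C` is regarded in `G` or in `G[C]`. The whole vertex set `C` of `G[C]` corresponds to the
trivial split `{C, ∅}` of `C`, while `V(G)` itself, the only split-module of `G` without a
counterpart, is ruled out by `rw(G) ≥ k + 2`.
-/

open SimpleGraph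

section RankWidth

variable {V W : Type*}

theorem cutRank_preimage_iso [Fintype V] [Fintype W] {G : SimpleGraph V} {H : SimpleGraph W}
    (e : G ≃g H) (U : Set W) : cutRank G (e ⁻¹' U) = cutRank H U := by
  unfold cutRank
  have hmat : (Matrix.of fun u w : V =>
      if u ∈ e ⁻¹' U ∧ w ∉ e ⁻¹' U ∧ G.Adj u w then (1 : ZMod 2) else 0) =
      (Matrix.of fun u w : W =>
        if u ∈ U ∧ w ∉ U ∧ H.Adj u w then (1 : ZMod 2) else 0).submatrix e e := by
    ext u w
    simp only [Matrix.submatrix_apply, Matrix.of_apply, Set.mem_preimage, e.map_adj_iff]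
  rw [hmat]
  exact Matrix.rank_submatrix _ e.toEquiv e.toEquiv

def RankDecomp.comapIso [Fintype V] [Fintype W] {G : SimpleGraph V} {H : SimpleGraph W}
    (D : RankDecomp H) (e : G ≃g H) : RankDecomp G where
  L := D.L
  fintypeL := D.fintypeL
  T := D.T
  isTree := D.isTree
  maxDeg := D.maxDeg
  toLeaf := D.toLeaf ∘ e
  inj := D.inj.comp e.injective
  range_eq := by rw [Set.range_comp, e.surjective.range_eq, Set.image_univ, D.range_eq]

theorem RankDecomp.WidthLE.comapIso [Fintype V] [Fintype W] {G : SimpleGraph V}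
    {H : SimpleGraph W} {D : RankDecomp H} {n : ℕ} (hD : D.WidthLE n) (e : G ≃g H) :
    (D.comapIso e).WidthLE n := fun x y hxy =>
  (cutRank_preimage_iso e
    {v | (D.T.deleteEdges {s(x, y)}).Reachable (D.toLeaf v) x}).trans_le (hD x y hxy)

-- The `Fintype` instances are taken from the goal: those of induced subgraphs occurring in it
-- need not be the ones instance synthesis would produce.
theorem rankWidth_congr {_ : Fintype V} {_ : Fintype W} {G : SimpleGraph V}
    {H : SimpleGraph W} (e : G ≃g H) : rankWidth G = rankWidth H := by
  unfold rankWidth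
  congr 1
  ext n
  exact ⟨fun ⟨D, hD⟩ => ⟨D.comapIso e.symm, hD.comapIso e.symm⟩,
    fun ⟨D, hD⟩ => ⟨D.comapIso e, hD.comapIso e⟩⟩

end RankWidth

namespace SimpleGraph

variable {V : Type*} (G : SimpleGraph V)

def induceInduceIso {C M : Set V} (hM : M ⊆ C) :
    (G.induce C).induce (Subtype.val ⁻¹' M) ≃g G.induce M where
  toEquiv := Equiv.subtypeSubtypeEquivSubtype fun hx => hM hx
  map_rel_iff' := Iff.rfl

theorem Preconnected.supp_eq_univ {G : SimpleGraph V} (h : G.Preconnected)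
    (c : G.ConnectedComponent) : c.supp = Set.univ :=
  Set.eq_univ_of_forall fun _ => h.subsingleton_connectedComponent.elim _ _

end SimpleGraph

section Split

variable {V : Type*} (G : SimpleGraph V)

theorem isSplitIn_self (C : Set V) : IsSplitIn G C C :=
  ⟨subset_rfl, fun _ ⟨_, _, _, hx, _⟩ => (hx.2 hx.1).elim⟩

theorem mem_extNbhdIn_induce_iff {C X : Set V} (hX : X ⊆ C) (a : C) :
    a ∈ extNbhdIn (G.induce C) Set.univ (Subtype.val ⁻¹' X) ↔ ↑a ∈ extNbhdIn G C X := by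
  simp only [extNbhdIn, Set.mem_ofPred_eq, Set.mem_univ, Set.mem_preimage, comap_adj,
    Function.Embedding.coe_subtype, Subtype.coe_prop, true_and]
  constructor
  · rintro ⟨ha, x, hx, hadj⟩
    exact ⟨ha, x, hx, hadj⟩
  · rintro ⟨ha, x, hx, hadj⟩
    exact ⟨ha, ⟨x, hX hx⟩, hx, hadj⟩

theorem isSplitIn_iff_induce {C M : Set V} (hM : M ⊆ C) :
    IsSplitIn G C M ↔ IsSplitIn (G.induce C) Set.univ (Subtype.val ⁻¹' M) := by
  have hcompl : (Set.univ : Set C) \ Subtype.val ⁻¹' M = Subtype.val ⁻¹' (C \ M) := by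
    ext
    simp
  have hlift : ∀ {X : Set V} {P : V → Prop}, (∀ a ∈ extNbhdIn G C X, P a) ↔
      ∀ a : C, ↑a ∈ extNbhdIn G C X → P a :=
    fun {_ _} => ⟨fun h a ha => h a ha, fun h a ha => h ⟨a, ha.1⟩ ha⟩
  simp only [IsSplitIn, hcompl, hM, Set.subset_univ, true_and, comap_adj,
    Function.Embedding.coe_subtype, mem_extNbhdIn_induce_iff G hM,
    mem_extNbhdIn_induce_iff G Set.sdiff_subset, hlift]

theorem isSplitModule_induce_supp_iff (c : G.ConnectedComponent) {M : Set V}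
    (hM : M ⊆ c.supp) (hne : M.Nonempty) :
    IsSplitModule (G.induce c.supp) (Subtype.val ⁻¹' M) ↔ IsSplitIn G c.supp M := by
  obtain ⟨x, hx⟩ := hne
  have hsupp (d : (G.induce c.supp).ConnectedComponent) : d.supp = Set.univ :=
    c.connected_toSimpleGraph.preconnected.supp_eq_univ d
  rw [isSplitIn_iff_induce G hM]
  constructor
  · rintro (huniv | hempty | ⟨d, hd⟩)
    · rw [huniv]
      exact isSplitIn_self _ _
    · exact (hempty.subset (show ⟨x, hM hx⟩ ∈ Subtype.val ⁻¹' M from hx)).elim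
    · rwa [hsupp] at hd
  · intro h
    exact Or.inr (Or.inr ⟨(G.induce c.supp).connectedComponentMk ⟨x, hM hx⟩, by rwa [hsupp]⟩)

end Split

theorem simRel_disconnected_general {V : Type*} [Fintype V] (k : ℕ) (G : SimpleGraph V)
    (hGrw : k + 2 ≤ rankWidth G) (v w : V) :
    simRel k G v w ↔
      ∃ h : w ∈ (G.connectedComponentMk v).supp,
        simRel k (G.induce (G.connectedComponentMk v).supp)
          ⟨v, ((G.connectedComponentMk v).mem_supp_iff v).mpr rfl⟩ ⟨w, h⟩ := by
  constructor
  · rintro ⟨M, rfl | rfl | ⟨c, hsplit⟩, hv, hw, hrw⟩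
    · rw [rankWidth_congr G.induceUnivIso] at hrw
      omega
    · exact hv.elim
    · obtain rfl : G.connectedComponentMk v = c := hsplit.1 hv
      refine ⟨hsplit.1 hw, Subtype.val ⁻¹' M,
        (isSplitModule_induce_supp_iff G _ hsplit.1 ⟨v, hv⟩).mpr hsplit, hv, hw, ?_⟩
      rwa [rankWidth_congr (G.induceInduceIso hsplit.1)]
  · rintro ⟨hwC, M', hsm, hv, hw, hrw⟩
    have hM : Subtype.val '' M' ⊆ (G.connectedComponentMk v).supp := Subtype.coe_image_subset _ _
    rw [← Subtype.val_injective.preimage_image M'] at hsm hv hw hrw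
    refine ⟨Subtype.val '' M', Or.inr (Or.inr ⟨_, (isSplitModule_induce_supp_iff G _ hM
      ⟨v, hv⟩).mp hsm⟩), hv, hw, ?_⟩
    rwa [rankWidth_congr (G.induceInduceIso hM)] at hrw

/-- Let `k ∈ ℕ` and let `G` be a disconnected finite simple graph with
rank-width at least `k + 2`. Then for all vertices `v, w`: `v ∼ₖ^G w` iff `v` and `w`
lie in the same connected component `G'` of `G` and `v ∼ₖ^{G'} w`, where `∼ₖ^{G'}` is
computed in the component `G'` (the subgraph of `G` induced on the support of the
connected component of `v`). -/
theorem simRel_disconnected {V : Type*} [Fintype V] (k : ℕ) (G : SimpleGraph V)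
    (hdis : ¬ G.Connected) (hGrw : k + 2 ≤ rankWidth G) (v w : V) :
    simRel k G v w ↔
      ∃ h : w ∈ (G.connectedComponentMk v).supp,
        simRel k (G.induce (G.connectedComponentMk v).supp)
          ⟨v, ((G.connectedComponentMk v).mem_supp_iff v).mpr rfl⟩ ⟨w, h⟩ :=
  simRel_disconnected_general k G hGrw v w
end
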